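/- Let ℓ ≥ 1 be an integer, let q₁, …, q_ℓ > 0 be positive real constants, let α₁, …, α_ℓ ∈ (0,1), and let τ > 0. Then the function F : (0,∞) → ℝ defined by F(s) = (Σ_{j=1}^ℓ q_j s^{α_j−1}) · exp(−τ · Σ_{k=1}^ℓ q_k s^{α_k}) is completely monotonic on (0,∞): F is infinitely differentiable on (0,∞) and for every n ∈ ℕ and every s > 0, (−1)^n F^{(n)}(s) ≥ 0 (where F^{(n)} denotes the n-th derivative). -/

import Mathlib

open Real Finset

/-- A sequence of functions each of which is the derivative of the previous one on `(0,∞)`. -/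
def IsDerivChain (g : ℕ → ℝ → ℝ) : Prop :=
  ∀ n, ∀ s : ℝ, 0 < s → HasDerivAt (g n) (g (n+1) s) s

/-- Derivative chain of `s ↦ c * s^β`. -/
noncomputable def powChain (c β : ℝ) (n : ℕ) (s : ℝ) : ℝ :=
  (c * ∏ i ∈ Finset.range n, (β - i)) * s ^ (β - n)

lemma powChain_isDerivChain (c β : ℝ) : IsDerivChain (powChain c β) := by
  intro n s hs
  have h := (Real.hasDerivAt_rpow_const (p := β - n) (Or.inl hs.ne')).const_mul
      (c * ∏ i ∈ Finset.range n, (β - i))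
  refine h.congr_deriv ?_
  unfold powChain
  rw [Finset.prod_range_succ, show β - ((n:ℕ)+1:ℕ) = β - n - 1 from by push_cast; ring]
  ring

lemma powChain_sign (c β : ℝ) (hc : 0 ≤ c) (hβ : β ≤ 0) (n : ℕ) (s : ℝ) (hs : 0 < s) :
    0 ≤ (-1 : ℝ) ^ n * powChain c β n s := by
  have key : (-1 : ℝ) ^ n * ∏ i ∈ Finset.range n, (β - i)
      = ∏ i ∈ Finset.range n, ((i : ℝ) - β) := by
    have hpow : (-1:ℝ)^n = ∏ _i ∈ Finset.range n, (-1:ℝ) := by simp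
    rw [hpow, ← Finset.prod_mul_distrib]
    exact Finset.prod_congr rfl (fun i _ => by ring)
  have h1 : 0 ≤ ∏ i ∈ Finset.range n, ((i : ℝ) - β) :=
    Finset.prod_nonneg fun i _ => sub_nonneg.mpr (hβ.trans (Nat.cast_nonneg i))
  have h2 : (0:ℝ) < s ^ (β - n) := Real.rpow_pos_of_pos hs _
  unfold powChain
  calc (0:ℝ) ≤ (c * ∏ i ∈ Finset.range n, ((i:ℝ) - β)) * s ^ (β - n) := by positivity
    _ = (-1:ℝ)^n * ((c * ∏ i ∈ Finset.range n, (β - i)) * s ^ (β - n)) := by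
        rw [← key]; ring

lemma pascal_sum (a b : ℕ → ℝ) (n : ℕ) :
    ∑ k ∈ Finset.range (n+1), (n.choose k : ℝ) * (a (k+1) * b (n-k) + a k * b (n+1-k))
      = ∑ k ∈ Finset.range (n+2), ((n+1).choose k : ℝ) * (a k * b (n+1-k)) := by
  have hsplit : ∑ k ∈ Finset.range (n+1), (n.choose k : ℝ) * (a (k+1) * b (n-k) + a k * b (n+1-k))
      = (∑ k ∈ Finset.range (n+1), (n.choose k : ℝ) * (a (k+1) * b (n-k)))
        + ∑ k ∈ Finset.range (n+1), (n.choose k : ℝ) * (a k * b (n+1-k)) := by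
    rw [← Finset.sum_add_distrib]; exact Finset.sum_congr rfl fun k _ => by ring
  rw [hsplit]
  -- RHS: peel off k = 0 and shift
  rw [Finset.sum_range_succ' (fun k => ((n+1).choose k : ℝ) * (a k * b (n+1-k))) (n+1)]
  have hchoose : ∀ k ∈ Finset.range (n+1), (((n+1).choose (k+1) : ℝ)) * (a (k+1) * b (n+1-(k+1)))
      = (n.choose k : ℝ) * (a (k+1) * b (n-k)) + (n.choose (k+1) : ℝ) * (a (k+1) * b (n-k)) := by
    intro k hk
    have : (n+1).choose (k+1) = n.choose k + n.choose (k+1) := Nat.choose_succ_succ n k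
    rw [this]
    push_cast [Nat.succ_sub_succ]
    ring
  rw [Finset.sum_congr rfl hchoose, Finset.sum_add_distrib]
  -- second sum reindex: ∑_{k∈range(n+1)} C(n,k+1) a(k+1) b(n-k) = ∑_{k∈range(n+1)} C(n,k) a k b (n+1-k) - C(n,0) a 0 b (n+1)
  have hshift : ∑ k ∈ Finset.range (n+1), (n.choose (k+1) : ℝ) * (a (k+1) * b (n-k))
      = ∑ k ∈ Finset.range (n+2), (n.choose k : ℝ) * (a k * b (n+1-k)) - (a 0 * b (n+1)) := by
    rw [Finset.sum_range_succ' (fun k => (n.choose k : ℝ) * (a k * b (n+1-k))) (n+1)]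
    have h1 : ∀ k ∈ Finset.range (n+1), (n.choose (k+1) : ℝ) * (a (k+1) * b (n+1-(k+1)))
        = (n.choose (k+1) : ℝ) * (a (k+1) * b (n-k)) := by
      intro k hk
      have : n + 1 - (k+1) = n - k := by omega
      rw [this]
    rw [Finset.sum_congr rfl h1]
    simp
  have hlast : (n.choose (n+1) : ℝ) * (a (n+1) * b (n+1-(n+1))) = 0 := by
    simp [Nat.choose_eq_zero_of_lt (Nat.lt_succ_self n)]
  rw [Finset.sum_range_succ (fun k => (n.choose k : ℝ) * (a k * b (n+1-k))) (n+1)] at hshift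
  rw [hlast, add_zero] at hshift
  rw [hshift]
  simp only [Nat.choose_zero_right, Nat.cast_one, Nat.sub_zero, one_mul]
  ring

/-- Leibniz chain for a product. -/
noncomputable def leibSeq (a b : ℕ → ℝ → ℝ) (n : ℕ) (s : ℝ) : ℝ :=
  ∑ k ∈ Finset.range (n+1), (n.choose k : ℝ) * (a k s * b (n-k) s)

lemma leibSeq_isDerivChain {a b : ℕ → ℝ → ℝ} (ha : IsDerivChain a) (hb : IsDerivChain b) :
    IsDerivChain (leibSeq a b) := by
  intro n s hs
  have hd : HasDerivAt (fun t => ∑ k ∈ Finset.range (n+1), (n.choose k : ℝ) * (a k t * b (n-k) t))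
      (∑ k ∈ Finset.range (n+1), (n.choose k : ℝ) * (a (k+1) s * b (n-k) s + a k s * b (n+1-k) s)) s := by
    apply HasDerivAt.fun_sum
    intro k hk
    have hk' : n - k + 1 = n + 1 - k := by
      have := Finset.mem_range.mp hk; omega
    have := ((ha k s hs).mul (hb (n-k) s hs)).const_mul ((n.choose k : ℝ))
    rw [hk'] at this
    exact this
    try ring
  have := pascal_sum (fun k => a k s) (fun k => b k s) n
  unfold leibSeq
  show HasDerivAt _ (∑ k ∈ Finset.range (n+2), (((n+1).choose k : ℕ) : ℝ) * (a k s * b (n+1-k) s)) s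
  rw [← this]
  exact hd

lemma leibSeq_sign {a b : ℕ → ℝ → ℝ}
    (ha : ∀ n s, 0 < s → 0 ≤ (-1:ℝ)^n * a n s) (hb : ∀ n s, 0 < s → 0 ≤ (-1:ℝ)^n * b n s)
    (n : ℕ) (s : ℝ) (hs : 0 < s) : 0 ≤ (-1:ℝ)^n * leibSeq a b n s := by
  unfold leibSeq
  rw [Finset.mul_sum]
  apply Finset.sum_nonneg
  intro k hk
  have hk' : k ≤ n := by have := Finset.mem_range.mp hk; omega
  have hsign : (-1:ℝ)^n = (-1:ℝ)^k * (-1:ℝ)^(n-k) := by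
    rw [← pow_add]; congr 1; omega
  calc (0:ℝ) ≤ (n.choose k : ℝ) * (((-1:ℝ)^k * a k s) * ((-1:ℝ)^(n-k) * b (n-k) s)) := by
        have := ha k s hs; have := hb (n-k) s hs; positivity
    _ = (-1:ℝ)^n * ((n.choose k : ℝ) * (a k s * b (n-k) s)) := by rw [hsign]; ring

/-- Derivative chain of a solution of `h' = -f h`, via Leibniz recursion. -/
noncomputable def expChain (f : ℕ → ℝ → ℝ) (h : ℝ → ℝ) : ℕ → ℝ → ℝ
  | 0 => h
  | (n+1) => fun s => -∑ k ∈ Finset.range (n+1), (n.choose k : ℝ) * (f k s * expChain f h (n-k) s)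
  termination_by n => n
  decreasing_by omega

lemma expChain_zero (f : ℕ → ℝ → ℝ) (h : ℝ → ℝ) : expChain f h 0 = h := by
  rw [expChain]

lemma expChain_succ (f : ℕ → ℝ → ℝ) (h : ℝ → ℝ) (n : ℕ) :
    expChain f h (n+1)
      = fun s => -∑ k ∈ Finset.range (n+1), (n.choose k : ℝ) * (f k s * expChain f h (n-k) s) := by
  rw [expChain]

lemma expChain_isDerivChain {f : ℕ → ℝ → ℝ} {h : ℝ → ℝ} (hf : IsDerivChain f)
    (hh : ∀ s : ℝ, 0 < s → HasDerivAt h (-(f 0 s * h s)) s) :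
    IsDerivChain (expChain f h) := by
  intro n
  induction n using Nat.strong_induction_on with
  | _ n ih =>
    intro s hs
    match n with
    | 0 =>
      rw [expChain_zero, expChain_succ]
      have := hh s hs
      convert this using 1
      simp [expChain_zero]
    | (m+1) =>
      rw [expChain_succ f h m, expChain_succ f h (m+1)]
      have hd : HasDerivAt (fun t => ∑ k ∈ Finset.range (m+1),
          (m.choose k : ℝ) * (f k t * expChain f h (m-k) t))
          (∑ k ∈ Finset.range (m+1), (m.choose k : ℝ) *
            (f (k+1) s * expChain f h (m-k) s + f k s * expChain f h (m+1-k) s)) s := by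
        apply HasDerivAt.fun_sum
        intro k hk
        have hkm : k ≤ m := by have := Finset.mem_range.mp hk; omega
        have hE : HasDerivAt (expChain f h (m-k)) (expChain f h (m-k+1) s) s :=
          ih (m-k) (by omega) s hs
        have := ((hf k s hs).mul hE).const_mul ((m.choose k : ℝ))
        have hk' : m - k + 1 = m + 1 - k := by omega
        rw [hk'] at this
        exact this
        try ring
      have hp := pascal_sum (fun k => f k s) (fun k => expChain f h k s) m
      have hd2 := hd.neg
      rw [hp] at hd2
      exact hd2

lemma expChain_sign {f : ℕ → ℝ → ℝ} {h : ℝ → ℝ}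
    (hf : ∀ n s, 0 < s → 0 ≤ (-1:ℝ)^n * f n s) (hh : ∀ s, 0 < s → 0 ≤ h s) :
    ∀ n s, 0 < s → 0 ≤ (-1:ℝ)^n * expChain f h n s := by
  intro n
  induction n using Nat.strong_induction_on with
  | _ n ih =>
    intro s hs
    match n with
    | 0 => simpa [expChain_zero] using hh s hs
    | (m+1) =>
      rw [expChain_succ]
      show 0 ≤ (-1:ℝ)^(m+1) * -∑ k ∈ Finset.range (m+1),
          (m.choose k : ℝ) * (f k s * expChain f h (m-k) s)
      rw [mul_neg, ← neg_mul, ← neg_one_mul ((-1:ℝ)^(m+1)), ← pow_succ']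
      rw [Finset.mul_sum]
      apply Finset.sum_nonneg
      intro k hk
      have hkm : k ≤ m := by have := Finset.mem_range.mp hk; omega
      have hsign : (-1:ℝ)^(m+2) = (-1:ℝ)^k * (-1:ℝ)^(m-k) * ((-1)^2 : ℝ) := by
        rw [← pow_add, ← pow_add]; congr 1; omega
      calc (0:ℝ) ≤ (m.choose k : ℝ) * (((-1:ℝ)^k * f k s) * ((-1:ℝ)^(m-k) * expChain f h (m-k) s)) := by
            have := hf k s hs; have := ih (m-k) (by omega) s hs; positivity
        _ = (-1:ℝ)^(m+2) * ((m.choose k : ℝ) * (f k s * expChain f h (m-k) s)) := by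
            rw [hsign]; ring

/-- On `(0,∞)`, iterated derivatives agree with a derivative chain. -/
lemma iteratedDeriv_eq_chain {F : ℝ → ℝ} {g : ℕ → ℝ → ℝ} (h0 : ∀ s : ℝ, 0 < s → g 0 s = F s)
    (hg : IsDerivChain g) : ∀ n, ∀ s : ℝ, 0 < s → iteratedDeriv n F s = g n s := by
  intro n
  induction n with
  | zero => intro s hs; simpa [iteratedDeriv_zero] using (h0 s hs).symm
  | succ n ih =>
    intro s hs
    rw [iteratedDeriv_succ]
    have hev : iteratedDeriv n F =ᶠ[nhds s] g n := by
      filter_upwards [Ioi_mem_nhds hs] with t ht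
      exact ih t ht
    rw [hev.deriv_eq]
    exact (hg n s hs).deriv


/-- The Laplace transform `s ↦ (Σ_j q_j s^{α_j−1}) · exp(−τ Σ_k q_k s^{α_k})` of the
subordination kernel of the multi-term time-fractional diffusion equation is completely
monotonic on `(0,∞)`. -/
theorem subordination_kernel_laplace_completely_monotonic
    (ℓ : ℕ) (hℓ : 1 ≤ ℓ) (q : Fin ℓ → ℝ) (hq : ∀ j, 0 < q j)
    (α : Fin ℓ → ℝ) (hα : ∀ j, α j ∈ Set.Ioo (0:ℝ) 1) (τ : ℝ) (hτ : 0 < τ) :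
    ContDiffOn ℝ (⊤ : ℕ∞)
        (fun s : ℝ =>
          (∑ j, q j * s ^ (α j - 1)) * Real.exp (-τ * ∑ k, q k * s ^ (α k)))
        (Set.Ioi 0) ∧
      ∀ (n : ℕ) (s : ℝ), 0 < s →
        0 ≤ (-1 : ℝ) ^ n *
          iteratedDeriv n
            (fun s : ℝ =>
              (∑ j, q j * s ^ (α j - 1)) * Real.exp (-τ * ∑ k, q k * s ^ (α k))) s := by
  set F : ℝ → ℝ := fun s =>
    (∑ j, q j * s ^ (α j - 1)) * Real.exp (-τ * ∑ k, q k * s ^ (α k)) with hF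
  -- chains
  set A : ℕ → ℝ → ℝ := fun n s => ∑ j, powChain (q j) (α j - 1) n s with hA
  set f : ℕ → ℝ → ℝ := fun n s => ∑ j, powChain (τ * q j * α j) (α j - 1) n s with hf
  set h : ℝ → ℝ := fun s => Real.exp (-τ * ∑ k, q k * s ^ (α k)) with hh
  have hAchain : IsDerivChain A := by
    intro n s hs
    exact HasDerivAt.fun_sum fun j _ => powChain_isDerivChain (q j) (α j - 1) n s hs
  have hfchain : IsDerivChain f := by
    intro n s hs
    exact HasDerivAt.fun_sum fun j _ => powChain_isDerivChain (τ * q j * α j) (α j - 1) n s hs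
  have hAsign : ∀ n s, 0 < s → 0 ≤ (-1:ℝ)^n * A n s := by
    intro n s hs
    rw [hA, Finset.mul_sum]
    exact Finset.sum_nonneg fun j _ =>
      powChain_sign (q j) (α j - 1) (hq j).le (by linarith [(hα j).2]) n s hs
  have hfsign : ∀ n s, 0 < s → 0 ≤ (-1:ℝ)^n * f n s := by
    intro n s hs
    rw [hf, Finset.mul_sum]
    exact Finset.sum_nonneg fun j _ =>
      powChain_sign (τ * q j * α j) (α j - 1)
        (by have := (hα j).1; have := hq j; positivity) (by linarith [(hα j).2]) n s hs
  -- the derivative of h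
  have hhd : ∀ s : ℝ, 0 < s → HasDerivAt h (-(f 0 s * h s)) s := by
    intro s hs
    have hinner : HasDerivAt (fun t : ℝ => -τ * ∑ k, q k * t ^ (α k))
        (-τ * ∑ k, q k * (α k * s ^ (α k - 1))) s := by
      apply HasDerivAt.const_mul
      apply HasDerivAt.fun_sum
      intro k _
      exact (Real.hasDerivAt_rpow_const (p := α k) (Or.inl hs.ne')).const_mul (q k)
    have := hinner.exp
    convert this using 1
    have hf0 : f 0 s = τ * ∑ j, q j * (α j * s ^ (α j - 1)) := by
      rw [hf, Finset.mul_sum]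
      apply Finset.sum_congr rfl
      intro j _
      simp [powChain]
      ring
    rw [hf0, hh]
    ring
  have hE := expChain_isDerivChain hfchain hhd
  have hhpos : ∀ s : ℝ, 0 < s → 0 ≤ h s := by
    intro s _
    rw [hh]
    positivity
  have hEsign := expChain_sign (f := f) (h := h) hfsign hhpos
  set g : ℕ → ℝ → ℝ := leibSeq A (expChain f h) with hg
  have hgchain : IsDerivChain g := leibSeq_isDerivChain hAchain hE
  have hg0 : ∀ s : ℝ, 0 < s → g 0 s = F s := by
    intro s hs
    rw [hg]
    unfold leibSeq
    simp [expChain_zero, powChain, hF, hA, hh]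
  have hiter := iteratedDeriv_eq_chain hg0 hgchain
  constructor
  · -- smoothness
    apply ContDiffOn.mul
    · apply ContDiffOn.sum
      intro j _
      intro x hx
      exact (contDiffAt_const.mul
        (Real.contDiffAt_rpow_const_of_ne (ne_of_gt hx))).contDiffWithinAt
    · apply ContDiffOn.exp
      apply ContDiffOn.mul contDiffOn_const
      apply ContDiffOn.sum
      intro k _
      intro x hx
      exact (contDiffAt_const.mul
        (Real.contDiffAt_rpow_const_of_ne (ne_of_gt hx))).contDiffWithinAt
  · intro n s hs
    rw [hiter n s hs]
    exact leibSeq_sign hAsign hEsign n s hs
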